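/- arXiv:1702.00274 — 3 statements merged into one kernel-verified Lean document; each statement's English description precedes it below -/
import Mathlib

section
/- Let S be a left reversible semitopological semigroup, i.e., a semigroup with a Hausdorff topology in which for each a ∈ S the maps s ↦ sa and s ↦ as are continuous, and in which any two closed right ideals have nonempty intersection. Define a relation on S by α ≥ β if and only if αS ⊆ cl(βS), where cl denotes topological closure. Then this relation is reflexive-up-to-the-ideal-order and transitive, and any two elements of S have a common upper bound; in particular (S, ≥) is a directed set. -/
/-! Common upper bounds come from left reversibility applied to the closed right ideals
`cl (aS)` and `cl (bS)`: any `c` in their intersection satisfies `cS ⊆ cl (aS) ∩ cl (bS)`. -/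

/-- The (closed under right multiplication) right ideal `aS` generated by `a`
in a semigroup `S`. -/
def rightIdeal {S : Type*} [Mul S] (a : S) : Set S := Set.range (fun s => a * s)

section RightIdeal

variable {S : Type*} [Semigroup S]

lemma rightIdeal_nonempty (a : S) : (rightIdeal a).Nonempty :=
  ⟨a * a, a, rfl⟩

lemma mul_mem_rightIdeal {a x : S} (hx : x ∈ rightIdeal a) (s : S) :
    x * s ∈ rightIdeal a := by
  obtain ⟨t, rfl⟩ := hx
  exact ⟨t * s, (mul_assoc a t s).symm⟩

variable [TopologicalSpace S]

lemma mul_mem_closure_rightIdeal (hmul : ∀ s : S, Continuous fun x : S => x * s)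
    {a x : S} (hx : x ∈ closure (rightIdeal a)) (s : S) :
    x * s ∈ closure (rightIdeal a) :=
  map_mem_closure (f := fun y => y * s) (hmul s) hx fun _ hy => mul_mem_rightIdeal hy s

lemma rightIdeal_subset_closure_of_mem (hmul : ∀ s : S, Continuous fun x : S => x * s)
    {a x : S} (hx : x ∈ closure (rightIdeal a)) :
    rightIdeal x ⊆ closure (rightIdeal a) := by
  rintro _ ⟨s, rfl⟩
  exact mul_mem_closure_rightIdeal hmul hx s

end RightIdeal

theorem directed_of_leftReversible_general
    {S : Type*} [Semigroup S] [TopologicalSpace S]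
    (hcont : ∀ a : S, Continuous (fun s : S => s * a) ∧ Continuous (fun s : S => a * s))
    (hrev : ∀ I J : Set S, IsClosed I → IsClosed J → I.Nonempty → J.Nonempty →
      (∀ x ∈ I, ∀ s : S, x * s ∈ I) → (∀ x ∈ J, ∀ s : S, x * s ∈ J) →
      (I ∩ J).Nonempty) :
    -- reflexivity: `α ≥ α`
    (∀ a : S, rightIdeal a ⊆ closure (rightIdeal a)) ∧
    -- transitivity: `b ≥ a` and `c ≥ b` imply `c ≥ a`
    (∀ a b c : S, rightIdeal b ⊆ closure (rightIdeal a) →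
      rightIdeal c ⊆ closure (rightIdeal b) →
      rightIdeal c ⊆ closure (rightIdeal a)) ∧
    -- directedness: any two elements have a common upper bound
    (∀ a b : S, ∃ c : S, rightIdeal c ⊆ closure (rightIdeal a) ∧
      rightIdeal c ⊆ closure (rightIdeal b)) := by
  have hmul : ∀ s : S, Continuous fun x : S => x * s := fun s => (hcont s).1
  refine ⟨fun a => subset_closure, fun a b c hba hcb => ?_, fun a b => ?_⟩
  · exact hcb.trans (closure_minimal hba isClosed_closure)
  · obtain ⟨c, hca, hcb⟩ := hrev _ _ isClosed_closure isClosed_closure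
      (rightIdeal_nonempty a).closure (rightIdeal_nonempty b).closure
      (fun _ hx => mul_mem_closure_rightIdeal hmul hx)
      (fun _ hx => mul_mem_closure_rightIdeal hmul hx)
    exact ⟨c, rightIdeal_subset_closure_of_mem hmul hca,
      rightIdeal_subset_closure_of_mem hmul hcb⟩

/-- Let `S` be a left reversible semitopological semigroup: a semigroup with a
Hausdorff topology in which multiplication is separately continuous, and in which
any two nonempty closed right ideals intersect.  Define `α ≥ β` iff
`αS ⊆ cl (βS)`.  Then this relation is reflexive, transitive, and any two
elements have a common upper bound; in particular `(S, ≥)` is a directed set. -/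
theorem directed_of_leftReversible
    {S : Type*} [Semigroup S] [TopologicalSpace S] [T2Space S]
    (hcont : ∀ a : S, Continuous (fun s : S => s * a) ∧ Continuous (fun s : S => a * s))
    (hrev : ∀ I J : Set S, IsClosed I → IsClosed J → I.Nonempty → J.Nonempty →
      (∀ x ∈ I, ∀ s : S, x * s ∈ I) → (∀ x ∈ J, ∀ s : S, x * s ∈ J) →
      (I ∩ J).Nonempty) :
    -- reflexivity: `α ≥ α`
    (∀ a : S, rightIdeal a ⊆ closure (rightIdeal a)) ∧
    -- transitivity: `b ≥ a` and `c ≥ b` imply `c ≥ a`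
    (∀ a b c : S, rightIdeal b ⊆ closure (rightIdeal a) →
      rightIdeal c ⊆ closure (rightIdeal b) →
      rightIdeal c ⊆ closure (rightIdeal a)) ∧
    -- directedness: any two elements have a common upper bound
    (∀ a b : S, ∃ c : S, rightIdeal c ⊆ closure (rightIdeal a) ∧
      rightIdeal c ⊆ closure (rightIdeal b)) :=
  directed_of_leftReversible_general hcont hrev
end

section
/- Let K be a weakly compact, convex, non-empty subset of a nearly uniformly convex Banach space E, and let S be a left reversible semitopological semigroup acting non-expansively and separately continuously on K. Then S has a common fixed point in K, i.e., there exists u ∈ K with s(u) = u for all s ∈ S. -/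
/-!
Take a minimal nonempty, convex, weakly compact `S`-invariant set `M ⊆ K` (Zorn) and an orbit
`u s = s(x₀)` with `x₀ ∈ M`. Directing `S` by its nonempty closed right ideals (a filter base by
left reversibility), the asymptotic radius `r(y) = limsup ‖u s - y‖` is convex, `1`-Lipschitz and
does not increase under the action, so by minimality it is constant, say `ρ`, on `M`.

If `ρ > 0`, averaging over finite nets of convex hulls produces orbit points `z n` that stay within
`ρ + κ` of all earlier ones but at distance at least `ρ - κ` from their convex hull. Near uniform
convexity bounds the distance from a weak cluster point `p` of `(z n)` to every `z m` by
`(1 - δ)(ρ + κ)`, whereas Mazur's theorem puts `p` within `κ` of the hull of `z 0, …, z (m - 1)`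
for some `m`, hence at distance at least `ρ - 2κ` from `z m`. So `ρ = 0`, and then
`‖s(x₀) - x₀‖ ≤ r(s(x₀)) + r(x₀) = 0`.
-/

open Filter

/-- A Banach space `E` is nearly uniformly convex (NUC) if for each `ε > 0` there is
`δ > 0` such that every sequence `(x n)` in the closed unit ball with separation
`sep (x n) = inf {‖x n - x m‖ : n ≠ m} > ε` satisfies
`dist (0, co {x n}) < 1 - δ`. -/
def NearlyUniformlyConvex (E : Type*) [NormedAddCommGroup E] [NormedSpace ℝ E] : Prop :=
  ∀ ε : ℝ, 0 < ε → ∃ δ : ℝ, 0 < δ ∧ ∀ x : ℕ → E,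
    (∀ n, x n ∈ Metric.closedBall (0 : E) 1) →
    ε < sInf {d : ℝ | ∃ n m : ℕ, n ≠ m ∧ d = ‖x n - x m‖} →
    Metric.infDist (0 : E) (convexHull ℝ (Set.range x)) < 1 - δ

open Set Bornology Metric

section

variable {E : Type*} [NormedAddCommGroup E]

section WeakTopology

variable [NormedSpace ℝ E]

theorem isClosed_of_isCompact_toWeakSpace {A : Set E} (hA : IsCompact (toWeakSpace ℝ E '' A)) :
    IsClosed A := by
  have := hA.isClosed.preimage (toWeakSpaceCLM ℝ E).continuous
  rwa [show ⇑(toWeakSpaceCLM ℝ E) = toWeakSpace ℝ E from rfl,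
    (toWeakSpace ℝ E).injective.preimage_image] at this

theorem Convex.isClosed_toWeakSpace_image {A : Set E} (hA : Convex ℝ A) (hcl : IsClosed A) :
    IsClosed (toWeakSpace ℝ E '' A) := by
  rw [← hcl.closure_eq, hA.toWeakSpace_closure ℝ]
  exact isClosed_closure

theorem IsCompact.toWeakSpace_image_of_subset {K A : Set E}
    (hK : IsCompact (toWeakSpace ℝ E '' K)) (hA : Convex ℝ A) (hcl : IsClosed A) (hAK : A ⊆ K) :
    IsCompact (toWeakSpace ℝ E '' A) :=
  hK.of_isClosed_subset (hA.isClosed_toWeakSpace_image hcl) (image_mono hAK)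

theorem isBounded_of_isCompact_toWeakSpace {A : Set E} (hA : IsCompact (toWeakSpace ℝ E '' A)) :
    IsBounded A := by
  have hvN := (hA.image (NormedSpace.inclusionInDoubleDualWeak ℝ E).continuous).isVonNBounded ℝ
  obtain ⟨C, hC⟩ := isBounded_iff_forall_norm_le.1 (WeakDual.isBounded_iff_isVonNBounded.2 hvN)
  refine isBounded_iff_forall_norm_le.2 ⟨C, fun x hx => ?_⟩
  calc ‖x‖ = ‖NormedSpace.inclusionInDoubleDualLi ℝ x‖ :=
        ((NormedSpace.inclusionInDoubleDualLi ℝ).norm_map x).symm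
    _ ≤ C := hC _ ⟨_, ⟨x, hx, rfl⟩, rfl⟩

theorem mem_closure_convexHull_of_mapClusterPt {z : ℕ → E} {p : E}
    (h : MapClusterPt (toWeakSpace ℝ E p) atTop (toWeakSpace ℝ E ∘ z)) :
    p ∈ closure (convexHull ℝ (range z)) := by
  have hmem : toWeakSpace ℝ E p ∈ closure (toWeakSpace ℝ E '' convexHull ℝ (range z)) := by
    refine closure_mono ?_ (mapClusterPt_atTop_iff_forall_mem_closure.1 h 0)
    rintro _ ⟨n, -, rfl⟩
    exact mem_image_of_mem _ (subset_convexHull ℝ _ (mem_range_self n))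
  rw [← (convex_convexHull ℝ _).toWeakSpace_closure ℝ] at hmem
  exact (toWeakSpace ℝ E).injective.mem_set_image.1 hmem

theorem MapClusterPt.frequently_lt_dual {ι : Type*} {l : Filter ι} {z : ι → E} {p : E}
    (h : MapClusterPt (toWeakSpace ℝ E p) l (toWeakSpace ℝ E ∘ z)) (f : StrongDual ℝ E) {a : ℝ}
    (ha : a < f p) : ∃ᶠ i in l, a < f (z i) :=
  h.frequently <| ((WeakBilin.eval_continuous (topDualPairing ℝ E).flip f).isOpen_preimage _
    isOpen_Ioi).mem_nhds ha

end WeakTopology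

section AsymptoticRadius

variable {ι : Type*} {F : Filter ι} {u : ι → E}

noncomputable def asymptoticRadius (F : Filter ι) (u : ι → E) (y : E) : ℝ :=
  limsup (fun i => ‖u i - y‖) F

theorem asymptoticRadius_le [F.NeBot] {y : E} {c : ℝ} (h : ∀ᶠ i in F, ‖u i - y‖ ≤ c) :
    asymptoticRadius F u y ≤ c :=
  limsup_le_of_le (isCoboundedUnder_le_of_le F fun _ => norm_nonneg _) h

theorem frequently_lt_of_lt_asymptoticRadius [F.NeBot] {y : E} {c : ℝ}
    (h : c < asymptoticRadius F u y) : ∃ᶠ i in F, c < ‖u i - y‖ :=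
  frequently_lt_of_lt_limsup (isCoboundedUnder_le_of_le F fun _ => norm_nonneg _) h

theorem eventually_lt_of_asymptoticRadius_lt (hu : IsBounded (range u)) {y : E} {c : ℝ}
    (h : asymptoticRadius F u y < c) : ∀ᶠ i in F, ‖u i - y‖ < c := by
  obtain ⟨C, hC⟩ := isBounded_iff_forall_norm_le.1 hu
  refine eventually_lt_of_limsup_lt h (isBoundedUnder_of ⟨C + ‖y‖, fun i => ?_⟩)
  exact (norm_sub_le _ _).trans (add_le_add_left (hC _ (mem_range_self i)) _)

variable [F.NeBot]

theorem asymptoticRadius_le_add_norm_sub (hu : IsBounded (range u)) (y z : E) :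
    asymptoticRadius F u y ≤ asymptoticRadius F u z + ‖y - z‖ := by
  refine le_of_forall_gt_imp_ge_of_dense fun c hc => asymptoticRadius_le ?_
  filter_upwards [eventually_lt_of_asymptoticRadius_lt hu (lt_sub_iff_add_lt.2 hc)] with i hi
  calc ‖u i - y‖ ≤ ‖u i - z‖ + ‖z - y‖ := norm_sub_le_norm_sub_add_norm_sub _ _ _
    _ ≤ c := by rw [norm_sub_rev z y]; linarith

theorem lipschitzWith_asymptoticRadius (hu : IsBounded (range u)) :
    LipschitzWith 1 (asymptoticRadius F u) :=
  LipschitzWith.of_le_add fun y z => by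
    simpa [dist_eq_norm] using asymptoticRadius_le_add_norm_sub hu y z

theorem convexOn_asymptoticRadius [NormedSpace ℝ E] (hu : IsBounded (range u)) :
    ConvexOn ℝ univ (asymptoticRadius F u) := by
  refine ⟨convex_univ, fun y _ z _ a b ha hb hab => le_of_forall_pos_le_add fun ε hε => ?_⟩
  refine asymptoticRadius_le ?_
  filter_upwards [eventually_lt_of_asymptoticRadius_lt hu (lt_add_of_pos_right _ hε),
    eventually_lt_of_asymptoticRadius_lt hu (lt_add_of_pos_right _ hε)] with i hy hz
  have hconv := (convexOn_univ_dist (u i)).2 (mem_univ y) (mem_univ z) ha hb hab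
  simp only [dist_comm _ (u i), dist_eq_norm, smul_eq_mul] at hconv
  calc ‖u i - (a • y + b • z)‖ ≤ a * ‖u i - y‖ + b * ‖u i - z‖ := hconv
    _ ≤ a * (asymptoticRadius F u y + ε) + b * (asymptoticRadius F u z + ε) := by
        gcongr
    _ = a * asymptoticRadius F u y + b * asymptoticRadius F u z + ε := by
        linear_combination ε * hab

theorem norm_sub_le_asymptoticRadius_add (hu : IsBounded (range u)) (y z : E) :
    ‖y - z‖ ≤ asymptoticRadius F u y + asymptoticRadius F u z := by
  refine le_of_forall_pos_lt_add fun ε hε => ?_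
  obtain ⟨i, hy, hz⟩ :=
    ((eventually_lt_of_asymptoticRadius_lt hu
        (lt_add_of_pos_right (asymptoticRadius F u y) (half_pos hε))).and
      (eventually_lt_of_asymptoticRadius_lt hu
        (lt_add_of_pos_right (asymptoticRadius F u z) (half_pos hε)))).exists
  calc ‖y - z‖ ≤ ‖y - u i‖ + ‖u i - z‖ := norm_sub_le_norm_sub_add_norm_sub _ _ _
    _ < _ := by rw [norm_sub_rev y]; linarith

end AsymptoticRadius

open Finset in
theorem le_norm_sub_of_le_norm_sub_average [NormedSpace ℝ E] {T : Finset E} {v t : E}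
    {ρ η : ℝ} (ht : t ∈ T) (hup : ∀ x ∈ T, ‖v - x‖ ≤ ρ + η)
    (hc : ρ - η ≤ ‖v - (#T : ℝ)⁻¹ • ∑ x ∈ T, x‖) :
    ρ - (2 * #T - 1) * η ≤ ‖v - t‖ := by
  classical
  have hcard : 1 ≤ #T := card_pos.2 ⟨t, ht⟩
  have hN : (0 : ℝ) < #T := by exact_mod_cast hcard
  have havg : (#T : ℝ) * ‖v - (#T : ℝ)⁻¹ • ∑ x ∈ T, x‖ ≤ ∑ x ∈ T, ‖v - x‖ := by
    calc (#T : ℝ) * ‖v - (#T : ℝ)⁻¹ • ∑ x ∈ T, x‖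
        = ‖(#T : ℝ) • (v - (#T : ℝ)⁻¹ • ∑ x ∈ T, x)‖ := by
          rw [norm_smul, Real.norm_of_nonneg hN.le]
      _ = ‖∑ x ∈ T, (v - x)‖ := by
          rw [smul_sub, smul_inv_smul₀ hN.ne', sum_sub_distrib, sum_const, Nat.cast_smul_eq_nsmul]
      _ ≤ ∑ x ∈ T, ‖v - x‖ := norm_sum_le _ _
  have hrest : ∑ x ∈ T.erase t, ‖v - x‖ ≤ (#T - 1) * (ρ + η) := by
    calc ∑ x ∈ T.erase t, ‖v - x‖ ≤ #(T.erase t) • (ρ + η) :=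
          sum_le_card_nsmul _ _ _ fun x hx => hup x (mem_of_mem_erase hx)
      _ = (#T - 1) * (ρ + η) := by
          rw [nsmul_eq_mul, card_erase_of_mem ht, Nat.cast_sub hcard, Nat.cast_one]
  have hsplit := add_sum_erase T (fun x => ‖v - x‖) ht
  nlinarith

open Finset in
theorem exists_norm_sub_le_and_le_norm_sub_convexHull [NormedSpace ℝ E] {ι : Type*}
    {F : Filter ι} [F.NeBot] {u : ι → E} (hu : IsBounded (range u)) {s : Finset E} {ρ κ : ℝ}
    (hκ : 0 < κ) (hs : ∀ x ∈ s, asymptoticRadius F u x ≤ ρ)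
    (hhull : ∀ y ∈ convexHull ℝ (s : Set E), ρ ≤ asymptoticRadius F u y) :
    ∃ i, (∀ x ∈ s, ‖u i - x‖ ≤ ρ + κ) ∧ ∀ w ∈ convexHull ℝ (s : Set E), ρ - κ ≤ ‖u i - w‖ := by
  obtain ⟨T, hTH, hTfin, hHT⟩ := finite_approx_of_totallyBounded
    (s.finite_toSet.isCompact_convexHull (𝕜 := ℝ)).totallyBounded (κ / 2) (half_pos hκ)
  lift T to Finset E using hTfin
  obtain rfl | hT := T.eq_empty_or_nonempty
  · obtain ⟨i⟩ := F.nonempty_of_neBot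
    obtain rfl : s = ∅ := by simpa using hHT
    exact ⟨i, by simp, by simp⟩
  set N : ℝ := ((T.card : ℕ) : ℝ)
  have hN : 1 ≤ N := by simpa [N] using hT.card_pos
  set η := κ / (4 * N) with hη_def
  have hη : 0 < η := by positivity
  have hηN : (2 * N - 1) * η ≤ κ / 2 := by
    have : 2 * N * η = κ / 2 := by rw [hη_def]; field_simp; ring
    nlinarith
  have hηκ : η ≤ κ := by nlinarith
  set c := N⁻¹ • ∑ x ∈ T, x with hc_def
  have hc : c ∈ convexHull ℝ (s : Set E) := by
    rw [hc_def, smul_sum]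
    refine (convex_convexHull ℝ _).sum_mem (fun _ _ => by positivity) ?_ fun x hx => hTH hx
    rw [sum_const, nsmul_eq_mul]
    exact mul_inv_cancel₀ (by positivity)
  -- `u i` is within `ρ + η` of the whole hull but farther than `ρ - η` from the barycentre `c`
  -- of the net `T`, which forces it to be far from every point of `T`.
  obtain ⟨i, hclose, hfar⟩ := (((eventually_all_finset s).2 fun x hx =>
      eventually_lt_of_asymptoticRadius_lt hu (show _ < ρ + η by linarith [hs x hx]))
    |>.and_frequently
      (frequently_lt_of_lt_asymptoticRadius (show ρ - η < _ by linarith [hhull c hc]))).exists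
  have hball : convexHull ℝ (s : Set E) ⊆ closedBall (u i) (ρ + η) :=
    convexHull_min (fun x hx => by simpa [dist_eq_norm'] using (hclose x hx).le)
      (convex_closedBall _ _)
  refine ⟨i, fun x hx => (hclose x hx).le.trans (by linarith), fun w hw => ?_⟩
  obtain ⟨t, ht, hwt⟩ := mem_iUnion₂.1 (hHT hw)
  have hfar_t := le_norm_sub_of_le_norm_sub_average ht
    (fun x hx => by simpa [dist_eq_norm'] using hball (hTH hx)) hfar.le
  have htri : ‖u i - t‖ ≤ ‖u i - w‖ + ‖w - t‖ := norm_sub_le_norm_sub_add_norm_sub _ _ _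
  rw [mem_ball, dist_eq_norm] at hwt
  linarith

theorem exists_seq_forall_image_range {α : Type*} [DecidableEq α] (P : α → Prop)
    (Q : Finset α → α → Prop) (h : ∀ s : Finset α, (∀ x ∈ s, P x) → ∃ y, P y ∧ Q s y) :
    ∃ z : ℕ → α, ∀ n, P (z n) ∧ Q ((Finset.range n).image z) (z n) := by
  have : Nonempty α := let ⟨y, _⟩ := h ∅ (by simp); ⟨y⟩
  choose! pick hpick using h
  let A : ℕ → Finset α := fun n => Nat.rec ∅ (fun _ A => insert (pick A) A) n
  have hA : ∀ n, A n = (Finset.range n).image (fun k => pick (A k)) ∧ ∀ x ∈ A n, P x := by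
    intro n
    induction n with
    | zero => simp [A]
    | succ n ih =>
      refine ⟨?_, fun x hx => ?_⟩
      · show insert (pick (A n)) (A n) = _
        rw [Finset.range_add_one, Finset.image_insert, ← ih.1]
      · obtain rfl | hx := Finset.mem_insert.1 hx
        exacts [(hpick _ ih.2).1, ih.2 x hx]
  refine ⟨fun n => pick (A n), fun n => ⟨(hpick _ (hA n).2).1, ?_⟩⟩
  rw [← (hA n).1]
  exact (hpick _ (hA n).2).2

theorem le_sInf_norm_sub_of_pairwise {x : ℕ → E} {c : ℝ}
    (h : Pairwise fun a b => c ≤ ‖x a - x b‖) :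
    c ≤ sInf {d : ℝ | ∃ n m : ℕ, n ≠ m ∧ d = ‖x n - x m‖} :=
  le_csInf ⟨_, 0, 1, zero_ne_one, rfl⟩ fun _ ⟨_, _, hab, hd⟩ => hd ▸ h hab

section NearlyUniformlyConvex

variable [NormedSpace ℝ E]

theorem convexHull_range_subset_iUnion_image_Iio (z : ℕ → E) :
    convexHull ℝ (range z) ⊆ ⋃ n, convexHull ℝ (z '' Iio n) := by
  refine convexHull_min (fun _ ⟨n, hn⟩ => mem_iUnion.2 ⟨n + 1, subset_convexHull ℝ _
    ⟨n, Nat.lt_succ_self n, hn⟩⟩) (Directed.convex_iUnion ?_ fun n => convex_convexHull ℝ _)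
  exact Monotone.directed_le fun m n h => convexHull_mono (image_mono (Iio_subset_Iio h))

theorem NearlyUniformlyConvex.exists_norm_sub_le (hE : NearlyUniformlyConvex E) {ε : ℝ}
    (hε : 0 < ε) :
    ∃ δ > 0, ∀ (z : ℕ → E) (p : E) (m : ℕ) {R c : ℝ}, 0 < R → ε * R < c →
      MapClusterPt (toWeakSpace ℝ E p) atTop (toWeakSpace ℝ E ∘ z) →
      (∀ n, m < n → ‖z n - z m‖ ≤ R) → Pairwise (fun a b => c ≤ ‖z a - z b‖) →
      ‖p - z m‖ ≤ (1 - δ) * R := by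
  obtain ⟨δ, hδ, hNUC⟩ := hE ε hε
  refine ⟨δ, hδ, fun z p m R c hR hc hp hzR hsep => le_of_forall_pos_le_add fun η hη => ?_⟩
  obtain ⟨f, hf, hfp⟩ := exists_dual_vector'' ℝ (p - z m)
  obtain ⟨φ, hφ, hφp⟩ := extraction_of_frequently_atTop
    ((hp.frequently_lt_dual f (sub_lt_self (f p) hη)).and_eventually (eventually_gt_atTop m))
  set x : ℕ → E := fun k => R⁻¹ • (z (φ k) - z m)
  have hx : ∀ k, x k ∈ closedBall 0 1 := fun k => by
    rw [mem_closedBall_zero_iff, norm_smul, Real.norm_of_nonneg (inv_nonneg.2 hR.le),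
      inv_mul_le_one₀ hR]
    exact hzR _ (hφp k).2
  have hxsep : ε < sInf {d : ℝ | ∃ n m : ℕ, n ≠ m ∧ d = ‖x n - x m‖} := by
    refine ((lt_div_iff₀ hR).2 hc).trans_le (le_sInf_norm_sub_of_pairwise fun a b hab => ?_)
    show c / R ≤ ‖R⁻¹ • (z (φ a) - z m) - R⁻¹ • (z (φ b) - z m)‖
    rw [← smul_sub, sub_sub_sub_cancel_right, norm_smul,
      Real.norm_of_nonneg (inv_nonneg.2 hR.le), div_eq_inv_mul]
    exact mul_le_mul_of_nonneg_left (hsep (hφ.injective.ne hab)) (inv_nonneg.2 hR.le)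
  obtain ⟨V, hV, hVnorm⟩ := (infDist_lt_iff ⟨x 0, subset_convexHull ℝ _ (mem_range_self 0)⟩).1
    (hNUC x hx hxsep)
  have hfV : R⁻¹ * (f p - η - f (z m)) ≤ f V := by
    refine convexHull_min ?_ (convex_halfSpace_ge f.isLinear _) hV
    rintro _ ⟨k, rfl⟩
    change R⁻¹ * _ ≤ f (R⁻¹ • (z (φ k) - z m))
    rw [map_smul, map_sub, smul_eq_mul]
    exact mul_le_mul_of_nonneg_left (by linarith [(hφp k).1]) (inv_nonneg.2 hR.le)
  have hfV' : f V ≤ 1 - δ := by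
    rw [dist_zero_left] at hVnorm
    exact (le_abs_self _).trans ((f.le_opNorm V).trans (by nlinarith [norm_nonneg V]))
  have : f p - η - f (z m) ≤ R * f V := by
    rwa [inv_mul_le_iff₀ hR] at hfV
  rw [map_sub, RCLike.ofReal_real_eq_id, id] at hfp
  nlinarith

theorem NearlyUniformlyConvex.exists_not_forall_le_norm_sub_convexHull
    (hE : NearlyUniformlyConvex E) {r : ℝ} (hr : 0 < r) :
    ∃ κ > 0, ∀ (z : ℕ → E) (p : E),
      MapClusterPt (toWeakSpace ℝ E p) atTop (toWeakSpace ℝ E ∘ z) →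
      (∀ i n, i < n → ‖z n - z i‖ ≤ r + κ) →
      ¬ ∀ n, ∀ w ∈ convexHull ℝ (z '' Iio n), r - κ ≤ ‖z n - w‖ := by
  obtain ⟨δ, hδ, hnorm⟩ := hE.exists_norm_sub_le one_half_pos
  have hδ' : 0 < min δ 1 := lt_min hδ one_pos
  -- this `κ` makes `(1 - δ) * (r + κ) + κ < r - κ`
  refine ⟨min δ 1 * r / 4, by positivity, fun z p hp hclose hfar => ?_⟩
  set κ := min δ 1 * r / 4 with hκ_def
  have hκr : κ ≤ r / 4 := by
    rw [hκ_def]; nlinarith [min_le_right δ 1]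
  have hsep : Pairwise fun a b => r - κ ≤ ‖z a - z b‖ := by
    intro a b hab
    rcases hab.lt_or_gt with h | h
    · rw [norm_sub_rev]
      exact hfar b _ (subset_convexHull ℝ _ (mem_image_of_mem z h))
    · exact hfar a _ (subset_convexHull ℝ _ (mem_image_of_mem z h))
  obtain ⟨W, hW, hpW⟩ := Metric.mem_closure_iff.1 (mem_closure_convexHull_of_mapClusterPt hp) κ
    (by positivity)
  obtain ⟨m, hWm⟩ := mem_iUnion.1 (convexHull_range_subset_iUnion_image_Iio z hW)
  have hlow := hfar m W hWm
  have hup := hnorm z p m (R := r + κ) (c := r - κ) (by positivity) (by linarith) hp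
    (fun n hn => hclose m n hn) hsep
  have htri : ‖z m - W‖ ≤ ‖z m - p‖ + ‖p - W‖ := norm_sub_le_norm_sub_add_norm_sub _ _ _
  rw [norm_sub_rev (z m) p, ← dist_eq_norm p W] at htri
  nlinarith [mul_le_mul_of_nonneg_right (min_le_left δ 1) (by positivity : (0 : ℝ) ≤ r + κ),
    mul_pos hδ' hr, mul_pos (mul_pos hδ' hδ') hr]

theorem NearlyUniformlyConvex.not_forall_asymptoticRadius_eq (hE : NearlyUniformlyConvex E)
    {ι : Type*} {F : Filter ι} [F.NeBot] {u : ι → E} {M : Set E} (hMc : Convex ℝ M)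
    (hMw : IsCompact (toWeakSpace ℝ E '' M)) (huM : ∀ i, u i ∈ M) {ρ : ℝ} (hρ : 0 < ρ) :
    ¬ ∀ y ∈ M, asymptoticRadius F u y = ρ := by
  classical
  intro hconst
  obtain ⟨κ, hκ, hno⟩ := hE.exists_not_forall_le_norm_sub_convexHull hρ
  have hu : IsBounded (range u) :=
    (isBounded_of_isCompact_toWeakSpace hMw).subset (range_subset_iff.2 huM)
  obtain ⟨z, hz⟩ := exists_seq_forall_image_range (· ∈ M)
    (fun s y => (∀ x ∈ s, ‖y - x‖ ≤ ρ + κ) ∧ ∀ w ∈ convexHull ℝ (s : Set E), ρ - κ ≤ ‖y - w‖)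
    fun s hs => by
      have hsub : convexHull ℝ (s : Set E) ⊆ M := convexHull_min hs hMc
      obtain ⟨i, hi⟩ := exists_norm_sub_le_and_le_norm_sub_convexHull hu hκ
        (fun x hx => (hconst x (hs x hx)).le) fun y hy => (hconst y (hsub hy)).ge
      exact ⟨u i, huM i, hi⟩
  obtain ⟨_, ⟨p, -, rfl⟩, hp⟩ := hMw.exists_mapClusterPt (f := atTop)
    (u := toWeakSpace ℝ E ∘ z) (tendsto_principal.2 (Eventually.of_forall fun n =>
      mem_image_of_mem _ (hz n).1))
  refine hno z p hp (fun i n hin => (hz n).2.1 _ (Finset.mem_image_of_mem z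
    (Finset.mem_range.2 hin))) fun n w hw => (hz n).2.2 w ?_
  rwa [Finset.coe_image, Finset.coe_range]

end NearlyUniformlyConvex

section RightIdeals

variable {S : Type*} [Semigroup S] [TopologicalSpace S]

def IsClosedRightIdeal (I : Set S) : Prop :=
  IsClosed I ∧ ∀ x ∈ I, ∀ s, x * s ∈ I

variable (S) in
def IsLeftReversible : Prop :=
  ∀ I J : Set S, IsClosedRightIdeal I → IsClosedRightIdeal J → I.Nonempty → J.Nonempty →
    (I ∩ J).Nonempty

variable (S) in
def rightIdealFilter : Filter S :=
  ⨅ I ∈ {I : Set S | IsClosedRightIdeal I ∧ I.Nonempty}, 𝓟 I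

theorem IsClosedRightIdeal.inter {I J : Set S} (hI : IsClosedRightIdeal I)
    (hJ : IsClosedRightIdeal J) : IsClosedRightIdeal (I ∩ J) :=
  ⟨hI.1.inter hJ.1, fun x hx s => ⟨hI.2 x hx.1 s, hJ.2 x hx.2 s⟩⟩

theorem IsClosedRightIdeal.closure_image_mul_left (hmul : ∀ a : S, Continuous (· * a))
    {I : Set S} (hI : IsClosedRightIdeal I) (t : S) :
    IsClosedRightIdeal (closure ((t * ·) '' I)) := by
  refine ⟨isClosed_closure, fun x hx s => ?_⟩
  have hmaps : MapsTo (· * s) ((t * ·) '' I) ((t * ·) '' I) := by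
    rintro _ ⟨y, hy, rfl⟩
    exact ⟨y * s, hI.2 y hy s, (mul_assoc t y s).symm⟩
  exact hmaps.closure (hmul s) hx

theorem IsLeftReversible.hasBasis_rightIdealFilter (h : IsLeftReversible S) [Nonempty S] :
    (rightIdealFilter S).HasBasis (fun I => IsClosedRightIdeal I ∧ I.Nonempty) id :=
  hasBasis_biInf_principal
    (fun I hI J hJ => ⟨I ∩ J, ⟨hI.1.inter hJ.1, h I J hI.1 hJ.1 hI.2 hJ.2⟩,
      inter_subset_left, inter_subset_right⟩)
    ⟨univ, ⟨isClosed_univ, fun _ _ _ => trivial⟩, univ_nonempty⟩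

theorem IsLeftReversible.neBot_rightIdealFilter (h : IsLeftReversible S) [Nonempty S] :
    (rightIdealFilter S).NeBot :=
  h.hasBasis_rightIdealFilter.neBot_iff.2 fun hI => hI.2

theorem IsLeftReversible.asymptoticRadius_le_of_nonexpansive (h : IsLeftReversible S)
    [Nonempty S] (hmul : ∀ a : S, Continuous (· * a)) {u : S → E} (hu : IsBounded (range u))
    (huc : Continuous u) {t : S} {g : E → E} {y : E} (hg_u : ∀ s, u (t * s) = g (u s))
    (hg : ∀ s, ‖g (u s) - g y‖ ≤ ‖u s - y‖) :
    asymptoticRadius (rightIdealFilter S) u (g y) ≤ asymptoticRadius (rightIdealFilter S) u y := by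
  have := h.neBot_rightIdealFilter
  refine le_of_forall_gt_imp_ge_of_dense fun c hc => asymptoticRadius_le ?_
  obtain ⟨I, hI, hIc⟩ :=
    h.hasBasis_rightIdealFilter.mem_iff.1 (eventually_lt_of_asymptoticRadius_lt hu hc)
  refine h.hasBasis_rightIdealFilter.mem_iff.2
    ⟨_, ⟨hI.1.closure_image_mul_left hmul t, (hI.2.image _).closure⟩, ?_⟩
  refine closure_minimal ?_ (isClosed_le (by fun_prop) continuous_const)
  rintro _ ⟨s, hs, rfl⟩
  show ‖u (t * s) - g y‖ ≤ c
  rw [hg_u]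
  exact (hg s).trans (hIc hs).le

end RightIdeals

section MinimalInvariantSet

variable [NormedSpace ℝ E] {ι : Type*}

structure IsWeaklyCompactConvexInvariant (T : ι → E → E) (A : Set E) : Prop where
  nonempty : A.Nonempty
  convex : Convex ℝ A
  isCompact : IsCompact (toWeakSpace ℝ E '' A)
  mapsTo : ∀ i, MapsTo (T i) A A

theorem exists_minimal_isWeaklyCompactConvexInvariant {T : ι → E → E} {K : Set E}
    (hK : IsWeaklyCompactConvexInvariant T K) :
    ∃ M ⊆ K, Minimal (IsWeaklyCompactConvexInvariant T) M := by
  refine zorn_superset_nonempty {A | IsWeaklyCompactConvexInvariant T A}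
    (fun c hc hchain hne => ⟨⋂₀ c, ?_, fun A hA => sInter_subset_of_mem hA⟩) K hK
  obtain ⟨A₀, hA₀⟩ := hne
  have : Nonempty c := ⟨⟨A₀, hA₀⟩⟩
  have hconv : Convex ℝ (⋂₀ c) := convex_sInter fun A hA => (hc hA).convex
  have hweak := IsCompact.nonempty_iInter_of_directed_nonempty_isCompact_isClosed
    (fun A : c => toWeakSpace ℝ E '' A)
    (fun A B => (hchain.total A.2 B.2).elim (fun hAB => ⟨A, le_rfl, image_mono hAB⟩)
      fun hBA => ⟨B, image_mono hBA, le_rfl⟩)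
    (fun A => (hc A.2).nonempty.image _) (fun A => (hc A.2).isCompact)
    fun A => (hc A.2).isCompact.isClosed
  rw [← image_iInter (toWeakSpace ℝ E).bijective, ← sInter_eq_iInter] at hweak
  exact ⟨hweak.of_image, hconv, (hc hA₀).isCompact.toWeakSpace_image_of_subset hconv
    (isClosed_sInter fun A hA => isClosed_of_isCompact_toWeakSpace (hc hA).isCompact)
    (sInter_subset_of_mem hA₀),
    fun i x hx => mem_sInter.2 fun A hA => (hc hA).mapsTo i (hx A hA)⟩

theorem ConvexOn.exists_isMinOn_of_isCompact_toWeakSpace {f : E → ℝ} (hf : ConvexOn ℝ univ f)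
    (hfc : Continuous f) {A : Set E} (hA : A.Nonempty) (hAw : IsCompact (toWeakSpace ℝ E '' A)) :
    ∃ x ∈ A, IsMinOn f A x := by
  have hlsc : LowerSemicontinuous (f ∘ (toWeakSpace ℝ E).symm) := by
    refine lowerSemicontinuous_iff_isClosed_preimage.2 fun c => ?_
    have hsub : f ⁻¹' Iic c = {x ∈ univ | f x ≤ c} := by ext; simp
    rw [preimage_comp, ← LinearEquiv.image_eq_preimage_symm, hsub]
    exact (hf.convex_le c).isClosed_toWeakSpace_image (hsub ▸ isClosed_Iic.preimage hfc)
  obtain ⟨_, ⟨x, hx, rfl⟩, hmin⟩ :=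
    (hlsc.lowerSemicontinuousOn _).exists_isMinOn (hA.image _) hAw
  exact ⟨x, hx, fun y hy => by simpa using hmin (mem_image_of_mem _ hy)⟩

theorem Minimal.exists_eq_const_of_convexOn {T : ι → E → E} {M : Set E}
    (hM : Minimal (IsWeaklyCompactConvexInvariant T) M) {f : E → ℝ} (hf : ConvexOn ℝ univ f)
    (hfc : Continuous f) (hfT : ∀ i, ∀ y ∈ M, f (T i y) ≤ f y) : ∃ c, ∀ y ∈ M, f y = c := by
  obtain ⟨y₀, hy₀, hmin⟩ :=
    hf.exists_isMinOn_of_isCompact_toWeakSpace hfc hM.prop.nonempty hM.prop.isCompact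
  have hconv : Convex ℝ {y ∈ M | f y ≤ f y₀} := by
    convert hM.prop.convex.inter (hf.convex_le (f y₀)) using 1
    ext; simp
  have hC : IsWeaklyCompactConvexInvariant T {y ∈ M | f y ≤ f y₀} :=
    ⟨⟨y₀, hy₀, le_rfl⟩, hconv, hM.prop.isCompact.toWeakSpace_image_of_subset hconv
      ((isClosed_of_isCompact_toWeakSpace hM.prop.isCompact).inter
        (isClosed_le hfc continuous_const)) (sep_subset _ _),
      fun i y hy => ⟨hM.prop.mapsTo i hy.1, (hfT i y hy.1).trans hy.2⟩⟩
  have hMC := hM.le_of_le hC (sep_subset _ _)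
  exact ⟨f y₀, fun y hy => le_antisymm (hMC hy).2 (hmin hy)⟩

end MinimalInvariantSet

end

theorem common_fixed_point_of_nearlyUniformlyConvex_general
    {E : Type*} [NormedAddCommGroup E] [NormedSpace ℝ E]
    (hNUC : NearlyUniformlyConvex E)
    {K : Set E} (hKw : IsCompact (toWeakSpace ℝ E '' K))
    (hKconv : Convex ℝ K) (hKne : K.Nonempty)
    {S : Type*} [Semigroup S] [TopologicalSpace S]
    (hcont : ∀ a : S, Continuous (fun s : S => s * a) ∧ Continuous (fun s : S => a * s))
    (hrev : ∀ I J : Set S, IsClosed I → IsClosed J → I.Nonempty → J.Nonempty →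
      (∀ x ∈ I, ∀ s : S, x * s ∈ I) → (∀ x ∈ J, ∀ s : S, x * s ∈ J) →
      (I ∩ J).Nonempty)
    (act : S → E → E)
    (hmaps : ∀ s : S, ∀ x ∈ K, act s x ∈ K)
    (haction : ∀ s t : S, ∀ x ∈ K, act (s * t) x = act s (act t x))
    (hsepcont₁ : ∀ x ∈ K, Continuous (fun s : S => act s x))
    (hnonexp : ∀ s : S, ∀ x ∈ K, ∀ y ∈ K, ‖act s x - act s y‖ ≤ ‖x - y‖) :
    ∃ u ∈ K, ∀ s : S, act s u = u := by
  rcases isEmpty_or_nonempty S with _ | _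
  · obtain ⟨x, hx⟩ := hKne
    exact ⟨x, hx, isEmptyElim⟩
  have hS : IsLeftReversible S := fun I J hI hJ hIne hJne =>
    hrev I J hI.1 hJ.1 hIne hJne hI.2 hJ.2
  have := hS.neBot_rightIdealFilter
  obtain ⟨M, hMK, hM⟩ :=
    exists_minimal_isWeaklyCompactConvexInvariant (T := act) ⟨hKne, hKconv, hKw, hmaps⟩
  obtain ⟨x₀, hx₀⟩ := hM.prop.nonempty
  set u : S → E := fun s => act s x₀
  have huM : ∀ s, u s ∈ M := fun s => hM.prop.mapsTo s hx₀
  have hu : IsBounded (range u) :=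
    (isBounded_of_isCompact_toWeakSpace hM.prop.isCompact).subset (range_subset_iff.2 huM)
  obtain ⟨ρ, hρ⟩ := hM.exists_eq_const_of_convexOn
    (convexOn_asymptoticRadius hu)
    (lipschitzWith_asymptoticRadius hu).continuous fun t y hy =>
      hS.asymptoticRadius_le_of_nonexpansive (fun a => (hcont a).1) hu (hsepcont₁ x₀ (hMK hx₀))
        (fun s => haction t s x₀ (hMK hx₀)) fun s => hnonexp t _ (hMK (huM s)) y (hMK hy)
  have hρ_nonpos : ρ ≤ 0 := not_lt.1 fun hpos =>
    hNUC.not_forall_asymptoticRadius_eq hM.prop.convex hM.prop.isCompact huM hpos hρ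
  refine ⟨x₀, hMK hx₀, fun s => ?_⟩
  have := norm_sub_le_asymptoticRadius_add (F := rightIdealFilter S) hu (u s) x₀
  rw [hρ _ (huM s), hρ _ hx₀] at this
  exact sub_eq_zero.1 (norm_le_zero_iff.1 (by linarith))

/-- **Corollary.** Let `K` be a weakly compact convex non-empty subset of a nearly
uniformly convex Banach space `E`, and let `S` be a left reversible semitopological
semigroup acting non-expansively and separately continuously on `K`.  Then `S` has
a common fixed point in `K`. -/
theorem common_fixed_point_of_nearlyUniformlyConvex
    {E : Type*} [NormedAddCommGroup E] [NormedSpace ℝ E] [CompleteSpace E]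
    (hNUC : NearlyUniformlyConvex E)
    {K : Set E} (hKw : IsCompact (toWeakSpace ℝ E '' K))
    (hKconv : Convex ℝ K) (hKne : K.Nonempty)
    {S : Type*} [Semigroup S] [TopologicalSpace S] [T2Space S]
    (hcont : ∀ a : S, Continuous (fun s : S => s * a) ∧ Continuous (fun s : S => a * s))
    (hrev : ∀ I J : Set S, IsClosed I → IsClosed J → I.Nonempty → J.Nonempty →
      (∀ x ∈ I, ∀ s : S, x * s ∈ I) → (∀ x ∈ J, ∀ s : S, x * s ∈ J) →
      (I ∩ J).Nonempty)
    (act : S → E → E)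
    (hmaps : ∀ s : S, ∀ x ∈ K, act s x ∈ K)
    (haction : ∀ s t : S, ∀ x ∈ K, act (s * t) x = act s (act t x))
    (hsepcont₁ : ∀ x ∈ K, Continuous (fun s : S => act s x))
    (hsepcont₂ : ∀ s : S, ContinuousOn (act s) K)
    (hnonexp : ∀ s : S, ∀ x ∈ K, ∀ y ∈ K, ‖act s x - act s y‖ ≤ ‖x - y‖) :
    ∃ u ∈ K, ∀ s : S, act s u = u :=
  common_fixed_point_of_nearlyUniformlyConvex_general hNUC hKw hKconv hKne hcont hrev act hmaps
    haction hsepcont₁ hnonexp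
end

section
/- Let E be a Banach space, Λ a directed set, K a non-empty subset of E, and for each α ∈ Λ let T_α : K → K be non-expansive. Let Ẽ = l∞(E)/𝒩 with 𝒩 = { (x_α) : lim_α ‖x_α‖ = 0 }, and let K̃ = { [(k_α)] ∈ Ẽ : k_α ∈ K for each α }. Then the map T̃ : K̃ → K̃ defined by T̃[(x_α)] = [(T_α x_α)] is well-defined (independent of the choice of representative with entries in K) and non-expansive: ‖T̃[(x_α)] − T̃[(y_α)]‖ ≤ ‖[(x_α)] − [(y_α)]‖ for all [(x_α)], [(y_α)] ∈ K̃. -/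
open Filter

theorem Filter.isBoundedUnder_le_norm_sub {ι E : Type*} [SeminormedAddCommGroup E]
    (l : Filter ι) {x y : ι → E} (hx : Bornology.IsBounded (Set.range x))
    (hy : Bornology.IsBounded (Set.range y)) :
    IsBoundedUnder (· ≤ ·) l fun i => ‖x i - y i‖ := by
  obtain ⟨Cx, hCx⟩ := hx.exists_norm_le
  obtain ⟨Cy, hCy⟩ := hy.exists_norm_le
  refine isBoundedUnder_of ⟨Cx + Cy, fun i => ?_⟩
  calc ‖x i - y i‖ ≤ ‖x i‖ + ‖y i‖ := norm_sub_le _ _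
    _ ≤ Cx + Cy := add_le_add (hCx _ (Set.mem_range_self i)) (hCy _ (Set.mem_range_self i))

theorem megaMapping_wellDefined_and_nonexpansive_general
    {E : Type*} [NormedAddCommGroup E]
    {Λ : Type*} [Preorder Λ] [Nonempty Λ] [IsDirected Λ (· ≤ ·)]
    {K : Set E}
    (T : Λ → E → E)
    (hnonexp : ∀ α : Λ, ∀ k ∈ K, ∀ k' ∈ K, ‖T α k - T α k'‖ ≤ ‖k - k'‖)
    (x y : Λ → E) (hxK : ∀ α, x α ∈ K) (hyK : ∀ α, y α ∈ K)
    (hxb : Bornology.IsBounded (Set.range x)) (hyb : Bornology.IsBounded (Set.range y)) :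
    (Tendsto (fun α => ‖x α - y α‖) atTop (nhds 0) →
      Tendsto (fun α => ‖T α (x α) - T α (y α)‖) atTop (nhds 0)) ∧
    limsup (fun α => ‖T α (x α) - T α (y α)‖) atTop ≤
      limsup (fun α => ‖x α - y α‖) atTop := by
  have hpointwise : ∀ α, ‖T α (x α) - T α (y α)‖ ≤ ‖x α - y α‖ :=
    fun α => hnonexp α _ (hxK α) _ (hyK α)
  refine ⟨squeeze_zero (fun _ => norm_nonneg _) hpointwise, ?_⟩
  -- `limsup` on `ℝ` is monotone only between families bounded on the relevant sides;
  -- otherwise it takes junk values, hence the boundedness of `x` and `y`.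
  exact limsup_le_limsup (.of_forall hpointwise)
    (isCoboundedUnder_le_of_le atTop fun _ => norm_nonneg _)
    (isBoundedUnder_le_norm_sub atTop hxb hyb)

/-- Let `E` be a Banach space, `Λ` a directed set, `K` a non-empty subset of `E`, and for
each `α ∈ Λ` let `T_α : K → K` be non-expansive.  In `Ẽ = l∞(E)/𝒩`, where
`𝒩 = {(n_α) : lim_α ‖n_α‖ = 0}` and the quotient norm satisfies
`‖[(x_α)]‖ = limsup_α ‖x_α‖`, the mega mapping `T̃[(x_α)] = [(T_α x_α)]` on
`K̃ = {[(k_α)] : k_α ∈ K}` is: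

* well defined, i.e. independent of the representative with entries in `K`:
  if `lim_α ‖x_α - y_α‖ = 0` then `lim_α ‖T_α x_α - T_α y_α‖ = 0`; and
* non-expansive: `‖T̃[(x_α)] - T̃[(y_α)]‖ ≤ ‖[(x_α)] - [(y_α)]‖`, i.e.
  `limsup_α ‖T_α x_α - T_α y_α‖ ≤ limsup_α ‖x_α - y_α‖`. -/
theorem megaMapping_wellDefined_and_nonexpansive
    {E : Type*} [NormedAddCommGroup E] [NormedSpace ℝ E] [CompleteSpace E]
    {Λ : Type*} [Preorder Λ] [Nonempty Λ] [IsDirected Λ (· ≤ ·)]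
    {K : Set E} (hKne : K.Nonempty)
    (T : Λ → E → E) (hmaps : ∀ α : Λ, ∀ k ∈ K, T α k ∈ K)
    (hnonexp : ∀ α : Λ, ∀ k ∈ K, ∀ k' ∈ K, ‖T α k - T α k'‖ ≤ ‖k - k'‖)
    (x y : Λ → E) (hxK : ∀ α, x α ∈ K) (hyK : ∀ α, y α ∈ K)
    (hxb : Bornology.IsBounded (Set.range x)) (hyb : Bornology.IsBounded (Set.range y)) :
    (Tendsto (fun α => ‖x α - y α‖) atTop (nhds 0) →
      Tendsto (fun α => ‖T α (x α) - T α (y α)‖) atTop (nhds 0)) ∧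
    limsup (fun α => ‖T α (x α) - T α (y α)‖) atTop ≤
      limsup (fun α => ‖x α - y α‖) atTop :=
  megaMapping_wellDefined_and_nonexpansive_general T hnonexp x y hxK hyK hxb hyb
end
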